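/- For the loop L = ℤ × ℤ with product (p,q)·(p',q') = (p+p', q+q'+C(p,2)·p'), the left multiplication group LMlt(L) is nilpotent of class at most 2: every triple iterated commutator [F₁,[F₂,F₃]] of elements of the group generated by the left translations is the identity. -/

import Mathlib

/-- C(p,2) = p(p-1)/2 for an arbitrary integer p. -/
def c2 (p : ℤ) : ℤ := p * (p - 1) / 2

/-- Left translation L_c by c in the loop L = ℤ × ℤ with product
(p,q)·(p',q') = (p+p', q+q'+C(p,2)·p'), as a permutation of L. -/
def Ltrans (c : ℤ × ℤ) : Equiv.Perm (ℤ × ℤ) where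
  toFun x := (c.1 + x.1, c.2 + x.2 + c2 c.1 * x.1)
  invFun y := (y.1 - c.1, y.2 - c.2 - c2 c.1 * (y.1 - c.1))
  left_inv x := by
    refine Prod.ext (by dsimp; ring) ?_
    dsimp
    ring
  right_inv y := by
    refine Prod.ext (by dsimp; ring) ?_
    dsimp
    ring

/-- The commutator F⁻¹ ∘ G⁻¹ ∘ F ∘ G of two permutations. -/
def pcomm (F G : Equiv.Perm (ℤ × ℤ)) : Equiv.Perm (ℤ × ℤ) := F⁻¹ * G⁻¹ * F * G

/-!
Every left translation acts on `ℤ × ℤ` as a shear `(p, q) ↦ (a + p, q + α p + β)`, and these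
shears form a group of Heisenberg type: the commutator of the shears with parameters `(a, α, _)`
and `(b, γ, _)` is the vertical translation by `α b - γ a`, which commutes with every shear.
Hence any commutator with a commutator is trivial.
-/

section Shear

variable {R : Type*} [CommRing R]

def IsShear (a α β : R) (F : Equiv.Perm (R × R)) : Prop :=
  ∀ x : R × R, F x = (a + x.1, x.2 + α * x.1 + β)

theorem isShear_one : IsShear (0 : R) 0 0 1 :=
  fun x => Prod.ext (by simp) (by simp)

theorem IsShear.mul {a α β b γ δ : R} {F G : Equiv.Perm (R × R)}
    (hF : IsShear a α β F) (hG : IsShear b γ δ G) :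
    IsShear (a + b) (α + γ) (α * b + β + δ) (F * G) := by
  intro x
  rw [Equiv.Perm.mul_apply, hG x, hF]
  exact Prod.ext (by dsimp; ring) (by dsimp; ring)

theorem IsShear.inv {a α β : R} {F : Equiv.Perm (R × R)} (hF : IsShear a α β F) :
    IsShear (-a) (-α) (α * a - β) F⁻¹ := by
  intro x
  rw [Equiv.Perm.inv_eq_iff_eq, hF]
  exact Prod.ext (by dsimp; ring) (by dsimp; ring)

theorem IsShear.eq_one {F : Equiv.Perm (R × R)} (hF : IsShear 0 0 0 F) : F = 1 :=
  Equiv.ext fun x => (hF x).trans (Prod.ext (by simp) (by simp))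

end Shear

theorem isShear_pcomm {a α β b γ δ : ℤ} {F G : Equiv.Perm (ℤ × ℤ)}
    (hF : IsShear a α β F) (hG : IsShear b γ δ G) :
    IsShear 0 0 (α * b - γ * a) (pcomm F G) := by
  intro x
  rw [pcomm, (((hF.inv.mul hG.inv).mul hF).mul hG) x]
  exact Prod.ext (by dsimp; ring) (by dsimp; ring)

theorem isShear_Ltrans (c : ℤ × ℤ) : IsShear c.1 (c2 c.1) c.2 (Ltrans c) :=
  fun _ => Prod.ext rfl (by dsimp [Ltrans]; ring)

theorem exists_isShear_of_mem_closure {F : Equiv.Perm (ℤ × ℤ)}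
    (hF : F ∈ Subgroup.closure (Set.range Ltrans)) : ∃ a α β : ℤ, IsShear a α β F := by
  induction hF using Subgroup.closure_induction with
  | mem F hF =>
    obtain ⟨c, rfl⟩ := hF
    exact ⟨_, _, _, isShear_Ltrans c⟩
  | one => exact ⟨_, _, _, isShear_one⟩
  | mul F G _ _ hF hG =>
    obtain ⟨_, _, _, hF⟩ := hF
    obtain ⟨_, _, _, hG⟩ := hG
    exact ⟨_, _, _, hF.mul hG⟩
  | inv F _ hF =>
    obtain ⟨_, _, _, hF⟩ := hF
    exact ⟨_, _, _, hF.inv⟩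

/-- The left multiplication group of the loop L = ℤ × ℤ with product
(p,q)·(p',q') = (p+p', q+q'+C(p,2)·p') is nilpotent of class at most 2:
every triple iterated commutator of elements of the subgroup generated by
the left translations is the identity. -/
theorem stmt6 (F₁ F₂ F₃ : Equiv.Perm (ℤ × ℤ))
    (h₁ : F₁ ∈ Subgroup.closure (Set.range Ltrans))
    (h₂ : F₂ ∈ Subgroup.closure (Set.range Ltrans))
    (h₃ : F₃ ∈ Subgroup.closure (Set.range Ltrans)) :
    pcomm F₁ (pcomm F₂ F₃) = 1 := by
  obtain ⟨_, _, _, s₁⟩ := exists_isShear_of_mem_closure h₁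
  obtain ⟨_, _, _, s₂⟩ := exists_isShear_of_mem_closure h₂
  obtain ⟨_, _, _, s₃⟩ := exists_isShear_of_mem_closure h₃
  have s := isShear_pcomm s₁ (isShear_pcomm s₂ s₃)
  rw [mul_zero, zero_mul, sub_zero] at s
  exact s.eq_one
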